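/- Let 𝕂 be a field of prime characteristic p, q, r ∈ 𝕂ˣ, and n, m ∈ ℕ₀ with n ≤ m, (m)_q! ≠ 0, b_m = ∏_{i=0}^{m-1}(1-q^i r) ≠ 0. Suppose n lies in the subset 𝕁₂ of 𝕁 (i.e., n ∈ 𝕁 and there exists j ∈ 𝕁 with j < n and q^{n+j-1}r² = 1). Then such j is unique, and moreover j ∈ 𝕁₁ (i.e., j ∈ 𝕁 and q^{k+j-1}r² ≠ 1 for all k ∈ 𝕁 with k < j). -/
import Mathlib


variable {K : Type*} [Field K]

/-- The q-number `(k)_x = ∑_{i=0}^{k-1} x^i`. -/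
def qNum (x : K) (k : ℕ) : K := ∑ i ∈ Finset.range k, x ^ i

/-- The q-factorial `(m)_q! = ∏_{k=1}^m (k)_q`. -/
def qFac (q : K) (m : ℕ) : K := ∏ k ∈ Finset.range m, qNum q (k + 1)

/-- `b_m = ∏_{i=0}^{m-1} (1 - q^i r)`. -/
def bProd (q r : K) (m : ℕ) : K := ∏ i ∈ Finset.range m, (1 - q ^ i * r)

/-- The recursively defined set 𝕁 = 𝕁^p_{q,r,s}. -/
def memJ (q r s : K) : ℕ → Prop
  | j => q ^ (j * (j - 1) / 2) * (-r) ^ j * s = -1 ∧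
      ∀ n, n < j → memJ q r s n →
        if (j - n) % 2 = 0
        then qNum (q ^ (n + j - 1) * r ^ 2) ((j - n) / 2) = 0
        else qNum (-(q ^ ((n + j - 1) / 2) * r)) (j - n) = 0
  termination_by j => j

/-- The subset 𝕁₁ ⊆ 𝕁 (condition (1) of Lemma le:J). -/
def memJ1 (q r s : K) (j : ℕ) : Prop :=
  memJ q r s j ∧ ∀ k, k < j → memJ q r s k → q ^ (k + j - 1) * r ^ 2 ≠ 1

/-- The subset 𝕁₂ ⊆ 𝕁 (condition (2) of Lemma le:J). -/
def memJ2 (q r s : K) (n : ℕ) : Prop :=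
  memJ q r s n ∧ ∃ j, j < n ∧ memJ q r s j ∧ q ^ (n + j - 1) * r ^ 2 = 1

lemma qNum_one' (k : ℕ) : qNum (1 : K) k = (k : K) := by simp [qNum]

lemma fac_ne {q : K} {m : ℕ} (hfac : qFac q m ≠ 0) {k : ℕ} (h1 : 1 ≤ k) (h2 : k ≤ m) :
    qNum q k ≠ 0 := by
  intro h
  apply hfac
  apply Finset.prod_eq_zero (Finset.mem_range.mpr (show k - 1 < m by omega))
  rwa [Nat.sub_add_cancel h1]

lemma pow_ne_one' {q : K} {m : ℕ} (hq1 : q ≠ 1) (hfac : qFac q m ≠ 0) {k : ℕ}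
    (h1 : 1 ≤ k) (h2 : k ≤ m) : q ^ k ≠ 1 := by
  intro hk
  apply fac_ne hfac h1 h2
  rw [qNum, geom_sum_eq hq1, hk, sub_self, zero_div]

theorem stmt_15 (p : ℕ) [CharP K p] (hp : p.Prime) (q r s : K)
    (hq : q ≠ 0) (hr : r ≠ 0) (hs : s ≠ 0) (n m : ℕ) (hnm : n ≤ m)
    (hfac : qFac q m ≠ 0) (hb : bProd q r m ≠ 0) (hn : memJ2 q r s n) :
    (∃! j : ℕ, j < n ∧ memJ q r s j ∧ q ^ (n + j - 1) * r ^ 2 = 1) ∧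
    ∀ j : ℕ, (j < n ∧ memJ q r s j ∧ q ^ (n + j - 1) * r ^ 2 = 1) → memJ1 q r s j := by
  obtain ⟨hnJ, j, hjn, hjJ, hjr⟩ := hn
  have hn1 : 1 ≤ n := by omega
  -- q ≠ 1
  have hq1 : q ≠ 1 := by
    intro h
    subst h
    rw [one_pow, one_mul] at hjr
    -- r ≠ 1
    have hr1 : r ≠ 1 := by
      intro h
      apply hb
      apply Finset.prod_eq_zero (Finset.mem_range.mpr (show 0 < m by omega))
      rw [h, pow_zero, one_mul, sub_self]
    -- r = -1
    have hrneg : r = -1 := by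
      have h2 : (r - 1) * (r + 1) = 0 := by linear_combination hjr
      rcases mul_eq_zero.mp h2 with h | h
      · exact absurd (sub_eq_zero.mp h) hr1
      · exact eq_neg_of_add_eq_zero_left h
    subst hrneg
    rw [memJ] at hnJ
    obtain ⟨-, hc⟩ := hnJ
    have hcj := hc j hjn hjJ
    split_ifs at hcj with hpar
    · rw [one_pow, one_mul, neg_one_sq, qNum_one'] at hcj
      exact fac_ne hfac (show 1 ≤ (n - j) / 2 by omega) (by omega)
        (by rw [qNum_one']; exact hcj)
    · rw [one_pow, one_mul, neg_neg, qNum_one'] at hcj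
      exact fac_ne hfac (show 1 ≤ n - j by omega) (by omega)
        (by rw [qNum_one']; exact hcj)
  have hqpow : ∀ k : ℕ, 1 ≤ k → k ≤ m → q ^ k ≠ 1 := fun k h1 h2 =>
    pow_ne_one' hq1 hfac h1 h2
  have cancel : ∀ a b : ℕ, a ≤ b → q ^ a * r ^ 2 = 1 → q ^ b * r ^ 2 = 1 →
      q ^ (b - a) = 1 := by
    intro a b hab h1 h2
    have h3 : q ^ (b - a) * (q ^ a * r ^ 2) = 1 := by
      rw [← mul_assoc, ← pow_add, show b - a + a = b by omega]
      exact h2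
    rwa [h1, mul_one] at h3
  constructor
  · refine ⟨j, ⟨hjn, hjJ, hjr⟩, ?_⟩
    rintro j' ⟨hj'n, hj'J, hj'r⟩
    rcases lt_trichotomy j' j with h | h | h
    · exfalso
      have := cancel (n + j' - 1) (n + j - 1) (by omega) hj'r hjr
      rw [show n + j - 1 - (n + j' - 1) = j - j' by omega] at this
      exact hqpow (j - j') (by omega) (by omega) this
    · exact h
    · exfalso
      have := cancel (n + j - 1) (n + j' - 1) (by omega) hjr hj'r
      rw [show n + j' - 1 - (n + j - 1) = j' - j by omega] at this
      exact hqpow (j' - j) (by omega) (by omega) this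
  · rintro j' ⟨hj'n, hj'J, hj'r⟩
    refine ⟨hj'J, ?_⟩
    intro k hk hkJ hkeq
    have := cancel (k + j' - 1) (n + j' - 1) (by omega) hkeq hj'r
    rw [show n + j' - 1 - (k + j' - 1) = n - k by omega] at this
    exact hqpow (n - k) (by omega) (by omega) this
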